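/- For any partition α and |q| < 1, the principal specializations of Schur functions at conjugate partitions satisfy s_{ᵗα}(q^{−ρ}) = q^{κ(α)/2} s_α(q^{−ρ}), where q^{−ρ} = (q^{i−1/2})_{i≥1} and κ(α) = Σ_i α_i(α_i − 2i + 1). -/

import Mathlib

open scoped Classical

/-- The ring of symmetric functions, realized inside formal power series in x_0, x_1, …. -/
abbrev SymFn := MvPowerSeries ℕ ℚ

/-- Semistandard Young tableaux of skew shape f/g (0-indexed rows/columns, entries in ℕ). -/
def IsSSYT (f g : ℕ → ℕ) (T : ℕ × ℕ → ℕ) : Prop :=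
  (∀ i j, g i ≤ j → j + 1 < f i → T (i, j) ≤ T (i, j + 1)) ∧
  (∀ i j, g i ≤ j → j < f i → g (i + 1) ≤ j → j < f (i + 1) → T (i, j) < T (i + 1, j)) ∧
  (∀ i j, ¬(g i ≤ j ∧ j < f i) → T (i, j) = 0)

/-- The tableau T has content d : its entries realize the monomial x^d. -/
def HasContent (f g : ℕ → ℕ) (T : ℕ × ℕ → ℕ) (d : ℕ →₀ ℕ) : Prop :=
  ∀ v : ℕ, d v = Nat.card {c : ℕ × ℕ | g c.1 ≤ c.2 ∧ c.2 < f c.1 ∧ T c = v}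

/-- The skew Schur function s_{f/g} = Σ_T x^T (0 when g ⊄ f). -/
noncomputable def skewSchur (f g : ℕ → ℕ) : SymFn :=
  fun d => if ∀ i, g i ≤ f i
    then (Nat.card {T : ℕ × ℕ → ℕ // IsSSYT f g T ∧ HasContent f g T d} : ℚ) else 0

/-- The Schur function s_f. -/
noncomputable def schur (f : ℕ → ℕ) : SymFn := skewSchur f fun _ => 0

/-- The second Casimir κ(μ) = Σ μ_i (μ_i - 2i + 1) (0-indexed form). -/
noncomputable def kappaZ (f : ℕ → ℕ) : ℤ :=
  ∑ᶠ i : ℕ, (f i : ℤ) * ((f i : ℤ) - 2 * (i : ℤ) - 1)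

/-- The conjugate (transpose) partition, as a function. -/
noncomputable def conjF (f : ℕ → ℕ) : ℕ → ℕ := fun j => Nat.card {i : ℕ | j < f i}

/-- Evaluation of a symmetric function at complex values x_i (as a convergent sum). -/
noncomputable def evalS (F : SymFn) (x : ℕ → ℂ) : ℂ :=
  ∑' d : ℕ →₀ ℕ, (F d : ℂ) * ∏ i ∈ d.support, x i ^ d i

/-!
At `x_i = v^(2i+1)` a tableau `T` of shape `λ` has weight `v^(Σ_c (2 T(c) + 1))`. Subtracting the
row index from every entry is a bijection from semistandard tableaux onto reverse plane partitions
(fillings weakly increasing along rows and columns), so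
`s_λ = v^(|λ| + 2 Σ_{(i,j) ∈ λ} i) · Σ_U v^(2|U|)`, the sum running over reverse plane partitions
`U` of shape `λ`. Transposition identifies the reverse plane partitions of `λ` and `ᵗλ`, so the two
sums agree, and the prefactors differ by `v^(2 Σ_{(i,j) ∈ λ} (j - i)) = v^κ(λ)`.
-/

open Function Finset

/-- The diagram of `g`, computed over the rows `i ∈ s`; any `s` containing the support of `g`
gives the same cells (`mem_cells`). -/
def cells (g : ℕ → ℕ) (s : Finset ℕ) : Finset (ℕ × ℕ) :=
  s.biUnion fun i => {i} ×ˢ range (g i)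

section Cells

variable {g : ℕ → ℕ} {s : Finset ℕ}

lemma mem_cells (hs : support g ⊆ s) (c : ℕ × ℕ) : c ∈ cells g s ↔ c.2 < g c.1 := by
  simp only [cells, mem_biUnion, mem_product, mem_singleton, mem_range]
  constructor
  · rintro ⟨i, -, rfl, hc⟩
    exact hc
  · intro hc
    exact ⟨c.1, hs (Nat.ne_zero_of_lt hc), rfl, hc⟩

lemma sum_cells {M : Type*} [AddCommMonoid M] (g : ℕ → ℕ) (s : Finset ℕ) (φ : ℕ × ℕ → M) :
    ∑ c ∈ cells g s, φ c = ∑ i ∈ s, ∑ j ∈ range (g i), φ (i, j) := by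
  rw [cells, sum_biUnion]
  · simp
  · intro a _ b _ hab
    simp only [disjoint_left, mem_product, mem_singleton]
    rintro c ⟨rfl, -⟩ ⟨rfl, -⟩
    exact hab rfl

lemma sum_cells_transpose {M : Type*} [AddCommMonoid M] {g' : ℕ → ℕ} {s' : Finset ℕ}
    (hs : support g ⊆ s) (hs' : support g' ⊆ s') (hrel : ∀ i j, j < g' i ↔ i < g j)
    (φ : ℕ × ℕ → M) :
    ∑ c ∈ cells g' s', φ c = ∑ c ∈ cells g s, φ c.swap := by
  refine sum_nbij' Prod.swap Prod.swap (fun c hc => ?_) (fun c hc => ?_)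
    (fun _ _ => rfl) (fun _ _ => rfl) (fun _ _ => rfl)
  · rw [mem_cells hs'] at hc
    exact (mem_cells hs _).2 ((hrel c.1 c.2).1 hc)
  · rw [mem_cells hs] at hc
    exact (mem_cells hs' _).2 ((hrel c.2 c.1).2 hc)

lemma card_cells_transpose {g' : ℕ → ℕ} {s' : Finset ℕ}
    (hs : support g ⊆ s) (hs' : support g' ⊆ s') (hrel : ∀ i j, j < g' i ↔ i < g j) :
    (cells g' s').card = (cells g s).card := by
  simp only [card_eq_sum_ones, sum_cells_transpose hs hs' hrel]

end Cells

noncomputable def contentOf (C : Finset (ℕ × ℕ)) (T : ℕ × ℕ → ℕ) : ℕ →₀ ℕ :=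
  ∑ c ∈ C, Finsupp.single (T c) 1

lemma contentOf_apply (C : Finset (ℕ × ℕ)) (T : ℕ × ℕ → ℕ) (u : ℕ) :
    contentOf C T u = #{c ∈ C | T c = u} := by
  simp only [contentOf, Finsupp.finsetSum_apply, Finsupp.single_apply, card_filter]

lemma prod_pow_contentOf {M : Type*} [CommMonoid M] (x : ℕ → M) (C : Finset (ℕ × ℕ))
    (T : ℕ × ℕ → ℕ) :
    (contentOf C T).prod (fun i n => x i ^ n) = ∏ c ∈ C, x (T c) := by
  rw [contentOf, ← Finsupp.prod_finsetSum_index (fun _ => pow_zero _) (fun _ _ _ => pow_add _ _ _)]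
  simp [Finsupp.prod_single_index]

lemma hasContent_iff_contentOf_eq {g : ℕ → ℕ} {s : Finset ℕ} (hs : support g ⊆ s)
    (T : ℕ × ℕ → ℕ) (d : ℕ →₀ ℕ) :
    HasContent g (fun _ => 0) T d ↔ contentOf (cells g s) T = d := by
  rw [HasContent, eq_comm, Finsupp.ext_iff]
  refine forall_congr' fun u => ?_
  rw [contentOf_apply, ← Set.ncard_coe_finset, ← Nat.card_coe_set_eq]
  congr!
  ext c
  simp [mem_cells hs]

lemma summable_prod_pi_of_nonneg {ι β : Type*} [Fintype ι] {w : β → ℝ} (hw : 0 ≤ w)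
    (hsum : Summable w) : Summable fun u : ι → β => ∏ i, w (u i) := by
  classical
  refine summable_of_sum_le (c := (∑' b, w b) ^ Fintype.card ι)
    (fun u => prod_nonneg fun i _ => hw _) fun S => ?_
  set t : Finset β := S.biUnion fun u => univ.image u
  calc ∑ u ∈ S, ∏ i, w (u i) ≤ ∑ u ∈ Fintype.piFinset fun _ => t, ∏ i, w (u i) := by
        refine sum_le_sum_of_subset_of_nonneg (fun u hu => ?_)
          fun u _ _ => prod_nonneg fun i _ => hw _
        exact Fintype.mem_piFinset.2 fun i => mem_biUnion.2 ⟨u, hu, mem_image_of_mem _ (mem_univ _)⟩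
    _ = ∏ _i : ι, ∑ b ∈ t, w b := (prod_univ_sum _ _).symm
    _ ≤ (∑' b, w b) ^ Fintype.card ι := by
        rw [prod_const, card_univ]
        exact pow_le_pow_left₀ (sum_nonneg fun b _ => hw b) (hsum.sum_le_tsum _ fun b _ => hw b) _

abbrev SSYT (g : ℕ → ℕ) := {T : ℕ × ℕ → ℕ // IsSSYT g (fun _ => 0) T}

section Tableaux

variable {g : ℕ → ℕ} {s : Finset ℕ}

lemma summable_prod_ssyt (hs : support g ⊆ s) {x : ℕ → ℂ} (hx : Summable fun n => ‖x n‖) :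
    Summable fun T : SSYT g => ∏ c ∈ cells g s, x (T.1 c) := by
  have hinj : Injective fun (T : SSYT g) (c : cells g s) => T.1 c := by
    rintro ⟨T, hT⟩ ⟨T', hT'⟩ h
    ext ⟨i, j⟩
    by_cases hc : j < g i
    · exact congrFun h ⟨(i, j), (mem_cells hs _).2 hc⟩
    · exact (hT.2.2 i j (fun h => hc h.2)).trans (hT'.2.2 i j (fun h => hc h.2)).symm
  have hnorm := (summable_prod_pi_of_nonneg (fun n => norm_nonneg (x n)) hx).comp_injective hinj
  refine Summable.of_norm (hnorm.congr fun T => ?_)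
  simp only [norm_prod, comp_apply, univ_eq_attach]
  exact prod_attach (cells g s) fun c => ‖x (T.1 c)‖

lemma schur_apply (g : ℕ → ℕ) (d : ℕ →₀ ℕ) :
    schur g d = Nat.card {T // IsSSYT g (fun _ => 0) T ∧ HasContent g (fun _ => 0) T d} := by
  simp [schur, skewSchur]

lemma evalS_schur_eq_tsum (hs : support g ⊆ s) {x : ℕ → ℂ} (hx : Summable fun n => ‖x n‖) :
    evalS (schur g) x = ∑' T : SSYT g, ∏ c ∈ cells g s, x (T.1 c) := by
  -- group the tableaux by content: the fibre over `d` has `schur g d` elements of weight `x ^ d`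
  set content := fun T : SSYT g => contentOf (cells g s) T.1
  refine (tsum_congr fun d => ?_).trans
    ((summable_prod_ssyt hs hx).hasSum.tsum_fiberwise content).tsum_eq
  have hfiber : ∀ T : content ⁻¹' {d},
      ∏ c ∈ cells g s, x (T.1.1 c) = ∏ i ∈ d.support, x i ^ d i := by
    rintro ⟨T, hT⟩
    rw [← prod_pow_contentOf, show contentOf (cells g s) T.1 = d from hT]
    rfl
  have hcard : Nat.card (content ⁻¹' {d}) =
      Nat.card {T // IsSSYT g (fun _ => 0) T ∧ HasContent g (fun _ => 0) T d} :=
    Nat.card_congr <|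
      (Equiv.subtypeSubtypeEquivSubtypeInter _ fun T => contentOf (cells g s) T = d).trans <|
        Equiv.subtypeEquivRight fun T => and_congr_right' (hasContent_iff_contentOf_eq hs T d).symm
  rw [tsum_congr hfiber, tsum_const, hcard, schur_apply, nsmul_eq_mul]
  push_cast
  rfl

end Tableaux

/-- Reverse plane partitions of shape `g`. -/
def IsRPP (g : ℕ → ℕ) (U : ℕ × ℕ → ℕ) : Prop :=
  (∀ i j, j + 1 < g i → U (i, j) ≤ U (i, j + 1)) ∧
  (∀ i j, j < g i → j < g (i + 1) → U (i, j) ≤ U (i + 1, j)) ∧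
  (∀ i j, ¬ j < g i → U (i, j) = 0)

abbrev RPP (g : ℕ → ℕ) := {U : ℕ × ℕ → ℕ // IsRPP g U}

def addRowIndex (g : ℕ → ℕ) (U : ℕ × ℕ → ℕ) : ℕ × ℕ → ℕ :=
  fun c => if c.2 < g c.1 then U c + c.1 else 0

section RowShift

variable {g : ℕ → ℕ}

lemma IsSSYT.row_le (hg : Antitone g) {T : ℕ × ℕ → ℕ} (hT : IsSSYT g (fun _ => 0) T) :
    ∀ {i j}, j < g i → i ≤ T (i, j)
  | 0, _, _ => Nat.zero_le _
  | i + 1, j, hj => by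
    have hj' : j < g i := hj.trans_le (hg i.le_succ)
    have := hT.2.1 i j (Nat.zero_le _) hj' (Nat.zero_le _) hj
    have := hT.row_le hg hj'
    omega

lemma IsSSYT.isRPP_sub_row {T : ℕ × ℕ → ℕ} (hT : IsSSYT g (fun _ => 0) T) :
    IsRPP g fun c => T c - c.1 := by
  refine ⟨fun i j hj => ?_, fun i j hj hj' => ?_, fun i j hj => ?_⟩
  · have := hT.1 i j (Nat.zero_le _) hj
    dsimp only
    omega
  · have := hT.2.1 i j (Nat.zero_le _) hj (Nat.zero_le _) hj'
    dsimp only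
    omega
  · simp [hT.2.2 i j (fun h => hj h.2)]

lemma IsRPP.isSSYT_addRowIndex {U : ℕ × ℕ → ℕ} (hU : IsRPP g U) :
    IsSSYT g (fun _ => 0) (addRowIndex g U) := by
  refine ⟨fun i j _ hj => ?_, fun i j _ hj _ hj' => ?_, fun i j hj => ?_⟩
  · have := hU.1 i j hj
    simp only [addRowIndex, if_pos hj, if_pos (show j < g i by omega)]
    omega
  · have := hU.2.1 i j hj hj'
    simp only [addRowIndex, if_pos hj, if_pos hj']
    omega
  · exact if_neg fun h => hj ⟨Nat.zero_le j, h⟩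

/-- Subtracting the row index turns strict increase down the columns into weak increase. -/
def ssytEquivRPP (hg : Antitone g) : SSYT g ≃ RPP g where
  toFun T := ⟨fun c => T.1 c - c.1, T.2.isRPP_sub_row⟩
  invFun U := ⟨addRowIndex g U.1, U.2.isSSYT_addRowIndex⟩
  left_inv := by
    rintro ⟨T, hT⟩
    ext ⟨i, j⟩
    by_cases hc : j < g i
    · have := hT.row_le hg hc
      simp only [addRowIndex, if_pos hc]
      omega
    · simp [addRowIndex, hc, hT.2.2 i j (fun h => hc h.2)]
  right_inv := by
    rintro ⟨U, hU⟩
    ext ⟨i, j⟩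
    by_cases hc : j < g i
    · simp [addRowIndex, hc]
    · simp [addRowIndex, hc, hU.2.2 i j hc]

lemma tsum_ssyt_principal (hg : Antitone g) {s : Finset ℕ} (hs : support g ⊆ s) (v : ℂ) :
    ∑' T : SSYT g, ∏ c ∈ cells g s, v ^ (2 * T.1 c + 1) =
      v ^ (#(cells g s) + 2 * ∑ c ∈ cells g s, c.1) *
        ∑' U : RPP g, v ^ (2 * ∑ c ∈ cells g s, U.1 c) := by
  rw [← (ssytEquivRPP hg).symm.tsum_eq, ← tsum_mul_left]
  refine tsum_congr fun U => ?_
  have hexp : ∀ c ∈ cells g s, 2 * addRowIndex g U.1 c + 1 = 2 * c.1 + 1 + 2 * U.1 c := by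
    intro c hc
    rw [addRowIndex, if_pos ((mem_cells hs c).1 hc)]
    ring
  rw [← pow_add, prod_pow_eq_pow_sum]
  simp only [ssytEquivRPP, Equiv.coe_fn_symm_mk, sum_congr rfl hexp, sum_add_distrib, ← mul_sum,
    sum_const, smul_eq_mul]
  ring_nf

end RowShift

lemma evalS_schur_principal {g : ℕ → ℕ} {s : Finset ℕ} {v : ℂ} (hv : ‖v‖ < 1)
    (hg : Antitone g) (hs : support g ⊆ s) :
    evalS (schur g) (fun i => v ^ (2 * i + 1)) =
      v ^ (#(cells g s) + 2 * ∑ c ∈ cells g s, c.1) *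
        ∑' U : RPP g, v ^ (2 * ∑ c ∈ cells g s, U.1 c) := by
  have hx : Summable fun n : ℕ => ‖v ^ (2 * n + 1)‖ := by
    simp_rw [norm_pow, pow_succ, pow_mul]
    exact (summable_geometric_of_lt_one (by positivity)
      (pow_lt_one₀ (norm_nonneg v) hv two_ne_zero)).mul_right _
  rw [evalS_schur_eq_tsum hs hx, tsum_ssyt_principal hg hs]

section Transpose

variable {g g' : ℕ → ℕ}

lemma antitone_of_lt_iff (hrel : ∀ i j, j < g' i ↔ i < g j) : Antitone g' := by
  intro a b hab
  by_contra! h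
  exact ((hrel a (g' a)).2 (hab.trans_lt ((hrel b (g' a)).1 h))).false

lemma IsRPP.comp_swap (hg : Antitone g) (hrel : ∀ i j, j < g' i ↔ i < g j) {U : ℕ × ℕ → ℕ}
    (hU : IsRPP g U) : IsRPP g' (U ∘ Prod.swap) := by
  refine ⟨fun i j hj => ?_, fun i j _ hj => ?_, fun i j hj => ?_⟩
  · have hj' := (hrel i (j + 1)).1 hj
    exact hU.2.1 j i (hj'.trans_le (hg j.le_succ)) hj'
  · exact hU.1 j i ((hrel (i + 1) j).1 hj)
  · exact hU.2.2 j i fun h => hj ((hrel i j).2 h)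

def rppTransposeEquiv (hg : Antitone g) (hrel : ∀ i j, j < g' i ↔ i < g j) : RPP g ≃ RPP g' where
  toFun U := ⟨U.1 ∘ Prod.swap, U.2.comp_swap hg hrel⟩
  invFun W := ⟨W.1 ∘ Prod.swap, W.2.comp_swap (antitone_of_lt_iff hrel) fun i j => (hrel j i).symm⟩
  left_inv _ := rfl
  right_inv _ := rfl

lemma tsum_rpp_transpose {α : Type*} [AddCommMonoid α] [TopologicalSpace α] (F : ℕ → α)
    {s s' : Finset ℕ} (hg : Antitone g) (hs : support g ⊆ s) (hs' : support g' ⊆ s')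
    (hrel : ∀ i j, j < g' i ↔ i < g j) :
    ∑' W : RPP g', F (∑ c ∈ cells g' s', W.1 c) = ∑' U : RPP g, F (∑ c ∈ cells g s, U.1 c) := by
  rw [← (rppTransposeEquiv hg hrel).tsum_eq]
  exact tsum_congr fun U => congrArg F (sum_cells_transpose hs hs' hrel _)

end Transpose

section Conjugate

variable {f : ℕ → ℕ}

lemma lt_conjF_iff (hf : Antitone f) (hfin : (support f).Finite) (i j : ℕ) :
    j < conjF f i ↔ i < f j := by
  have hcard : conjF f i = {k | i < f k}.ncard := Nat.card_coe_set_eq _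
  constructor
  · intro hj
    by_contra! hij
    have hsub : {k | i < f k} ⊆ ↑(range j) := fun k (hk : i < f k) => by
      by_contra hkj
      have := hf (not_lt.1 (mt mem_range.2 hkj))
      omega
    have := Set.ncard_le_ncard hsub (range j).finite_toSet
    rw [Set.ncard_coe_finset, card_range] at this
    omega
  · intro hij
    have hsub : ↑(range (j + 1)) ⊆ {k | i < f k} := fun k hk =>
      hij.trans_le (hf (Nat.lt_succ_iff.1 (mem_range.1 hk)))
    have := Set.ncard_le_ncard hsub (hfin.subset fun k (hk : i < f k) => Nat.ne_zero_of_lt hk)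
    rw [Set.ncard_coe_finset, card_range] at this
    omega

lemma support_conjF_subset (hf : Antitone f) (hfin : (support f).Finite) :
    support (conjF f) ⊆ range (f 0) := fun j hj =>
  mem_range.2 ((lt_conjF_iff hf hfin j 0).1 (Nat.pos_of_ne_zero hj))

lemma kappaZ_eq_sum_cells {s : Finset ℕ} (hs : support f ⊆ s) :
    kappaZ f = 2 * ∑ c ∈ cells f s, ((c.2 : ℤ) - c.1) := by
  have hrow : ∀ i n : ℕ, 2 * ∑ j ∈ range n, ((j : ℤ) - i) = n * (n - 2 * i - 1) := by
    intro i n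
    induction n with
    | zero => simp
    | succ n ih =>
      rw [sum_range_succ, mul_add, ih]
      push_cast
      ring
  rw [kappaZ, finsum_eq_sum_of_support_subset _ fun i hi => hs fun h => hi (by simp [h]),
    sum_cells, mul_sum]
  exact sum_congr rfl fun i _ => (hrow i (f i)).symm

end Conjugate

/-- s_{ᵗα}(q^{−ρ}) = q^{κ(α)/2} s_α(q^{−ρ}), where q^{−ρ} = (q^{i−1/2})_{i≥1}
(0-indexed: x_i = q^{i+1/2} = v^{2i+1}, with v = q^{1/2}). -/
theorem schur_conj_principal (v q : ℂ) (hv : v ^ 2 = q)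
    (h0 : 0 < ‖q‖) (h1 : ‖q‖ < 1)
    (f : ℕ → ℕ) (hf : Antitone f) (hfin : (Function.support f).Finite) :
    evalS (schur (conjF f)) (fun i => v ^ (2 * i + 1)) =
      v ^ kappaZ f * evalS (schur f) (fun i => v ^ (2 * i + 1)) := by
  subst hv
  have hv0 : v ≠ 0 := by
    rintro rfl
    simp at h0
  have hv1 : ‖v‖ < 1 := by
    rwa [norm_pow, pow_lt_one_iff_of_nonneg (norm_nonneg v) two_ne_zero] at h1
  have hs : support f ⊆ hfin.toFinset := hfin.coe_toFinset.superset
  have hs' := support_conjF_subset hf hfin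
  have hrel := lt_conjF_iff hf hfin
  rw [evalS_schur_principal hv1 (antitone_of_lt_iff hrel) hs', evalS_schur_principal hv1 hf hs,
    tsum_rpp_transpose (fun n => v ^ (2 * n)) hf hs hs' hrel, card_cells_transpose hs hs' hrel,
    sum_cells_transpose hs hs' hrel, ← mul_assoc, ← zpow_natCast, ← zpow_natCast, ← zpow_add₀ hv0,
    kappaZ_eq_sum_cells hs]
  simp only [Prod.fst_swap, sum_sub_distrib]
  push_cast
  ring_nf
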